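/- Let h : X → [0,∞) be Lipschitz with constant c and h(p) = 0, and let v : [0,∞) → X be continuously differentiable with v(0) = v₀ and v′(τ) = −h(v(τ))·(v(τ) − p) for all τ ≥ 0. Then with θ̃(τ) = exp(−∫₀^τ h(v(σ)) dσ) one has v(τ) = θ̃(τ)·v₀ + (1 − θ̃(τ))·p, θ̃(τ) ≥ 1/(1 + c·‖v₀ − p‖·τ), and hence ‖v(τ) − p‖ ≥ ‖v₀ − p‖/(1 + c·‖v₀ − p‖·τ) for all τ ≥ 0. -/

import Mathlib

open Set Filter intervalIntegral

/-!
Along the flow `v - p` only changes by a positive scalar factor, so with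
`F(τ) = ∫₀^τ h(v)` the product `exp F(τ) • (v(τ) - p)` is constant and
`v(τ) - p = θ̃(τ) • (v₀ - p)`. The Lipschitz bound then gives
`F' = h(v) ≤ c‖v - p‖ = c‖v₀ - p‖ exp(-F)`, i.e. `(exp F)' ≤ c‖v₀ - p‖`, so `exp F` grows at
most linearly and `θ̃ = exp(-F)` decays at most like `1/(1 + c‖v₀ - p‖τ)`.
-/

theorem hasDerivWithinAt_integral_Ici {E : Type*} [NormedAddCommGroup E] [NormedSpace ℝ E]
    [CompleteSpace E]
    {f : ℝ → E} {a x : ℝ} (hf : ContinuousOn f (Ici a)) (hx : a ≤ x) :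
    HasDerivWithinAt (fun u => ∫ σ in a..u, f σ) (f x) (Ici x) x := by
  have hIoi : Ioi x ⊆ Ici a := fun y hy => hx.trans (le_of_lt hy)
  refine integral_hasDerivWithinAt_right (t := Ioi x)
    ((hf.mono ?_).intervalIntegrable) ?_ ((hf x hx).mono hIoi)
  · rw [uIcc_of_le hx]
    exact Icc_subset_Ici_self
  · exact ⟨Ici a, mem_of_superset self_mem_nhdsWithin hIoi,
      hf.aestronglyMeasurable measurableSet_Ici⟩

theorem continuousOn_integral_Icc {E : Type*} [NormedAddCommGroup E] [NormedSpace ℝ E]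
    {f : ℝ → E} {a b : ℝ} (hf : ContinuousOn f (Ici a)) (hab : a ≤ b) :
    ContinuousOn (fun u => ∫ σ in a..u, f σ) (Icc a b) := by
  rw [← uIcc_of_le hab]
  refine continuousOn_primitive_interval (hf.mono ?_).integrableOn_uIcc
  rw [uIcc_of_le hab]
  exact Icc_subset_Ici_self

theorem exp_smul_eq_of_hasDerivWithinAt_neg_smul {E : Type*} [NormedAddCommGroup E]
    [NormedSpace ℝ E] {F f : ℝ → ℝ} {w : ℝ → E} {a b : ℝ}
    (hF : ContinuousOn F (Icc a b)) (hw : ContinuousOn w (Icc a b))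
    (hF' : ∀ x ∈ Ico a b, HasDerivWithinAt F (f x) (Ici x) x)
    (hw' : ∀ x ∈ Ico a b, HasDerivWithinAt w (-f x • w x) (Ici x) x) :
    ∀ x ∈ Icc a b, Real.exp (F x) • w x = Real.exp (F a) • w a := by
  refine constant_of_has_deriv_right_zero ((Real.continuous_exp.comp_continuousOn hF).smul hw)
    fun x hx => ?_
  refine ((hF' x hx).exp.smul (hw' x hx)).congr_deriv ?_
  rw [smul_smul, ← add_smul, mul_neg, neg_add_cancel, zero_smul]

theorem exp_le_add_mul_of_hasDerivWithinAt_le_mul_exp_neg {F f : ℝ → ℝ} {a b C : ℝ}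
    (hF : ContinuousOn F (Icc a b)) (hF' : ∀ x ∈ Ico a b, HasDerivWithinAt F (f x) (Ici x) x)
    (hf : ∀ x ∈ Ico a b, f x ≤ C * Real.exp (-F x)) :
    ∀ x ∈ Icc a b, Real.exp (F x) ≤ Real.exp (F a) + C * (x - a) := by
  refine image_le_of_deriv_right_le_deriv_boundary (Real.continuous_exp.comp_continuousOn hF)
    (fun x hx => (hF' x hx).exp) (by simp) (by fun_prop)
    (fun x _ => ((hasDerivWithinAt_id x _).sub_const a).const_mul C |>.const_add _)
    fun x hx => ?_
  calc Real.exp (F x) * f x ≤ Real.exp (F x) * (C * Real.exp (-F x)) := by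
        gcongr; exact hf x hx
    _ = C * 1 := by rw [Real.exp_neg]; field_simp

theorem eq_exp_neg_integral_smul_of_hasDerivWithinAt {E : Type*} [NormedAddCommGroup E]
    [NormedSpace ℝ E] {a : ℝ → ℝ} {w : ℝ → E} {t₀ : ℝ} (ha : ContinuousOn a (Ici t₀))
    (hw' : ∀ t ∈ Ici t₀, HasDerivWithinAt w (-a t • w t) (Ici t₀) t) :
    ∀ t ∈ Ici t₀, w t = Real.exp (-∫ s in t₀..t, a s) • w t₀ := by
  intro t (ht : t₀ ≤ t)
  have hw : ContinuousOn w (Ici t₀) := fun x hx => (hw' x hx).continuousWithinAt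
  have hconst := exp_smul_eq_of_hasDerivWithinAt_neg_smul (continuousOn_integral_Icc ha ht)
    (hw.mono Icc_subset_Ici_self) (fun x hx => hasDerivWithinAt_integral_Ici ha hx.1)
    (fun x hx => (hw' x hx.1).mono (Ici_subset_Ici.mpr hx.1)) t (right_mem_Icc.mpr ht)
  rw [Real.exp_neg, eq_inv_smul_iff₀ (Real.exp_pos _).ne', hconst, integral_same, Real.exp_zero,
    one_smul]

theorem exp_integral_le_of_le_mul_exp_neg_integral {a : ℝ → ℝ} {t₀ C : ℝ}
    (ha : ContinuousOn a (Ici t₀))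
    (hbound : ∀ t ∈ Ici t₀, a t ≤ C * Real.exp (-∫ s in t₀..t, a s)) :
    ∀ t ∈ Ici t₀, Real.exp (∫ s in t₀..t, a s) ≤ 1 + C * (t - t₀) := by
  intro t (ht : t₀ ≤ t)
  simpa using exp_le_add_mul_of_hasDerivWithinAt_le_mul_exp_neg (continuousOn_integral_Icc ha ht)
    (fun x hx => hasDerivWithinAt_integral_Ici ha hx.1) (fun x hx => hbound x hx.1) t
    (right_mem_Icc.mpr ht)

theorem modified_determining_form_rate_general
    {X : Type*} [NormedAddCommGroup X] [NormedSpace ℝ X]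
    (p v₀ : X) (c : ℝ) (h : X → ℝ)
    (hlip : ∀ x y : X, |h x - h y| ≤ c * ‖x - y‖)
    (hp : h p = 0)
    (v : ℝ → X) (hv0 : v 0 = v₀)
    (hv' : ∀ τ ∈ Set.Ici (0:ℝ),
      HasDerivWithinAt v ((-(h (v τ))) • (v τ - p)) (Set.Ici 0) τ)
    (θ : ℝ → ℝ)
    (hθ : ∀ τ, θ τ = Real.exp (-(∫ σ in (0:ℝ)..τ, h (v σ)))) :
    ∀ τ ∈ Set.Ici (0:ℝ),
      v τ = θ τ • v₀ + (1 - θ τ) • p ∧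
      1 / (1 + c * ‖v₀ - p‖ * τ) ≤ θ τ ∧
      ‖v₀ - p‖ / (1 + c * ‖v₀ - p‖ * τ) ≤ ‖v τ - p‖ := by
  have hhv : ContinuousOn (fun σ => h (v σ)) (Ici 0) :=
    (LipschitzWith.of_dist_le' fun x y => by rw [Real.dist_eq, dist_eq_norm]; exact hlip x y
      ).continuous.comp_continuousOn fun x hx => (hv' x hx).continuousWithinAt
  have hsol : ∀ τ ∈ Ici 0, v τ - p = θ τ • (v₀ - p) := by
    rw [← hv0]
    simpa only [hθ] using eq_exp_neg_integral_smul_of_hasDerivWithinAt hhv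
      fun τ hτ => (hv' τ hτ).sub_const p
  have hθ_pos : ∀ τ, 0 < θ τ := fun τ => hθ τ ▸ Real.exp_pos _
  intro τ hτ
  have hθτ : 1 / (1 + c * ‖v₀ - p‖ * τ) ≤ θ τ := by
    have hgrowth := exp_integral_le_of_le_mul_exp_neg_integral (C := c * ‖v₀ - p‖) hhv
      (fun x hx => ?_) τ hτ
    · rw [hθ, Real.exp_neg, ← one_div]
      exact one_div_le_one_div_of_le (Real.exp_pos _) (by simpa only [sub_zero] using hgrowth)
    calc h (v x) ≤ c * ‖v x - p‖ := by simpa [hp] using (le_abs_self _).trans (hlip (v x) p)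
      _ = c * ‖v₀ - p‖ * Real.exp (-∫ σ in (0:ℝ)..x, h (v σ)) := by
        rw [hsol x hx, norm_smul, Real.norm_of_nonneg (hθ_pos x).le, hθ]
        ring
  refine ⟨?_, hθτ, ?_⟩
  · linear_combination (norm := module) hsol τ hτ
  · rw [hsol τ hτ, norm_smul, Real.norm_of_nonneg (hθ_pos τ).le]
    calc ‖v₀ - p‖ / (1 + c * ‖v₀ - p‖ * τ) = 1 / (1 + c * ‖v₀ - p‖ * τ) * ‖v₀ - p‖ := by ring
      _ ≤ θ τ * ‖v₀ - p‖ := by gcongr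

/-- For the modified determining form `dv/dτ = -h(v)·(v - p)` with `h : X → [0,∞)`
Lipschitz with constant `c` and `h(p) = 0`: with
`θ̃(τ) = exp(-∫₀^τ h(v(σ)) dσ)` one has `v(τ) = θ̃(τ)·v₀ + (1-θ̃(τ))·p`,
`θ̃(τ) ≥ 1/(1 + c‖v₀ - p‖τ)`, and hence
`‖v(τ) - p‖ ≥ ‖v₀ - p‖/(1 + c‖v₀ - p‖τ)` for all `τ ≥ 0`. -/
theorem modified_determining_form_rate
    {X : Type*} [NormedAddCommGroup X] [NormedSpace ℝ X] [CompleteSpace X]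
    (p v₀ : X) (c : ℝ) (hc : 0 ≤ c) (h : X → ℝ)
    (hpos : ∀ x, 0 ≤ h x)
    (hlip : ∀ x y : X, |h x - h y| ≤ c * ‖x - y‖)
    (hp : h p = 0)
    (v : ℝ → X) (hv0 : v 0 = v₀)
    (hv' : ∀ τ ∈ Set.Ici (0:ℝ),
      HasDerivWithinAt v ((-(h (v τ))) • (v τ - p)) (Set.Ici 0) τ)
    (θ : ℝ → ℝ)
    (hθ : ∀ τ, θ τ = Real.exp (-(∫ σ in (0:ℝ)..τ, h (v σ)))) :
    ∀ τ ∈ Set.Ici (0:ℝ),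
      v τ = θ τ • v₀ + (1 - θ τ) • p ∧
      1 / (1 + c * ‖v₀ - p‖ * τ) ≤ θ τ ∧
      ‖v₀ - p‖ / (1 + c * ‖v₀ - p‖ * τ) ≤ ‖v τ - p‖ :=
  modified_determining_form_rate_general p v₀ c h hlip hp v hv0 hv' θ hθ
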